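/- Conjunction splitting on the left in PCL without cut: if the single-formula sequent p₁ ∧ … ∧ p_n ⊢ q is derivable then the multiset sequent p₁, …, p_n ⊢ q is derivable. -/
import Mathlib


/-- Formulae of Propositional Contract Logic: atoms, ⊥, ⊤, ¬, ∧, ∨, →, and the
contractual implication ↠ (`cimp`). -/
inductive PCLForm where
  | atom : ℕ → PCLForm
  | bot : PCLForm
  | top : PCLForm
  | neg : PCLForm → PCLForm
  | conj : PCLForm → PCLForm → PCLForm
  | disj : PCLForm → PCLForm → PCLForm
  | imp : PCLForm → PCLForm → PCLForm
  | cimp : PCLForm → PCLForm → PCLForm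
deriving DecidableEq

/-- Cut-free (and weakR-free) sequent calculus for PCL over multiset contexts:
the standard intuitionistic rules plus Zero, Fix, PrePost for ↠. -/
inductive Der : Multiset PCLForm → PCLForm → Prop where
  | id (Γ p) : Der (p ::ₘ Γ) p
  | andL1 {Γ p q c} : Der (p ::ₘ (PCLForm.conj p q) ::ₘ Γ) c →
      Der ((PCLForm.conj p q) ::ₘ Γ) c
  | andL2 {Γ p q c} : Der (q ::ₘ (PCLForm.conj p q) ::ₘ Γ) c →
      Der ((PCLForm.conj p q) ::ₘ Γ) c
  | andR {Γ p q} : Der Γ p → Der Γ q → Der Γ (PCLForm.conj p q)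
  | orL {Γ p q c} : Der (p ::ₘ (PCLForm.disj p q) ::ₘ Γ) c →
      Der (q ::ₘ (PCLForm.disj p q) ::ₘ Γ) c → Der ((PCLForm.disj p q) ::ₘ Γ) c
  | orR1 {Γ p q} : Der Γ p → Der Γ (PCLForm.disj p q)
  | orR2 {Γ p q} : Der Γ q → Der Γ (PCLForm.disj p q)
  | impL {Γ p q c} : Der ((PCLForm.imp p q) ::ₘ Γ) p →
      Der (q ::ₘ (PCLForm.imp p q) ::ₘ Γ) c → Der ((PCLForm.imp p q) ::ₘ Γ) c
  | impR {Γ p q} : Der (p ::ₘ Γ) q → Der Γ (PCLForm.imp p q)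
  | negL {Γ p c} : Der ((PCLForm.neg p) ::ₘ Γ) p → Der ((PCLForm.neg p) ::ₘ Γ) c
  | negR {Γ p} : Der (p ::ₘ Γ) PCLForm.bot → Der Γ (PCLForm.neg p)
  | botL (Γ p) : Der (PCLForm.bot ::ₘ Γ) p
  | topR (Γ) : Der Γ PCLForm.top
  | zero {Γ p q} : Der Γ q → Der Γ (PCLForm.cimp p q)
  | fix {Γ p q c} : Der (c ::ₘ (PCLForm.cimp p q) ::ₘ Γ) p →
      Der (q ::ₘ (PCLForm.cimp p q) ::ₘ Γ) c → Der ((PCLForm.cimp p q) ::ₘ Γ) c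
  | prepost {Γ p q a b} : Der (a ::ₘ (PCLForm.cimp p q) ::ₘ Γ) p →
      Der (q ::ₘ (PCLForm.cimp p q) ::ₘ Γ) b →
      Der ((PCLForm.cimp p q) ::ₘ Γ) (PCLForm.cimp a b)

/-- The right-associated conjunction `p₁ ∧ (p₂ ∧ (… ∧ pₙ))` of a nonempty
list of formulae, given as head `p` and tail `ps`. -/
def conjList : PCLForm → List PCLForm → PCLForm
  | p, [] => p
  | p, q :: rest => .conj p (conjList q rest)


theorem Der.ex {Γ : Multiset PCLForm} {c : PCLForm} (d : Der Γ c) {Δ : Multiset PCLForm}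
    (h : Γ = Δ) : Der Δ c := h ▸ d

theorem der_mem {Γ : Multiset PCLForm} {p : PCLForm} (h : p ∈ Γ) : Der Γ p :=
  (Der.id _ p).ex (Multiset.cons_erase h)

theorem der_bot {Γ : Multiset PCLForm} (h : PCLForm.bot ∈ Γ) (p : PCLForm) : Der Γ p :=
  (Der.botL _ p).ex (Multiset.cons_erase h)

theorem mem_ext {Γ Δ : Multiset PCLForm} (h : ∀ a, a ∈ Γ → a ∈ Δ) (x : PCLForm) :
    ∀ a, a ∈ x ::ₘ Γ → a ∈ x ::ₘ Δ := by
  intro a ha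
  rcases Multiset.mem_cons.mp ha with rfl | ha
  · exact Multiset.mem_cons_self _ _
  · exact Multiset.mem_cons_of_mem (h a ha)

theorem mem_erase_ext {Γ Δ : Multiset PCLForm} {x : PCLForm} (hc : x ∈ Δ)
    (h : ∀ a, a ∈ Γ → a ∈ Δ) : ∀ a, a ∈ Γ → a ∈ x ::ₘ Δ.erase x := by
  intro a ha
  rw [Multiset.cons_erase hc]
  exact h a ha

/-- Context change along membership-preserving maps: weakening+contraction+exchange. -/
theorem der_sub {Γ : Multiset PCLForm} {c : PCLForm} (d : Der Γ c) :
    ∀ Δ : Multiset PCLForm, (∀ a, a ∈ Γ → a ∈ Δ) → Der Δ c := by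
  induction d with
  | id Γ p =>
    intro Δ hΔ
    exact der_mem (hΔ p (Multiset.mem_cons_self _ _))
  | @andL1 Γ p q c prem ih =>
    intro Δ hΔ
    have hc := hΔ _ (Multiset.mem_cons_self _ _)
    exact (Der.andL1 (ih _ (mem_ext (mem_erase_ext hc hΔ) p))).ex (Multiset.cons_erase hc)
  | @andL2 Γ p q c prem ih =>
    intro Δ hΔ
    have hc := hΔ _ (Multiset.mem_cons_self _ _)
    exact (Der.andL2 (ih _ (mem_ext (mem_erase_ext hc hΔ) q))).ex (Multiset.cons_erase hc)
  | andR h1 h2 ih1 ih2 =>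
    intro Δ hΔ; exact Der.andR (ih1 Δ hΔ) (ih2 Δ hΔ)
  | @orL Γ p q c h1 h2 ih1 ih2 =>
    intro Δ hΔ
    have hc := hΔ _ (Multiset.mem_cons_self _ _)
    exact (Der.orL (ih1 _ (mem_ext (mem_erase_ext hc hΔ) p))
      (ih2 _ (mem_ext (mem_erase_ext hc hΔ) q))).ex (Multiset.cons_erase hc)
  | orR1 h ih => intro Δ hΔ; exact Der.orR1 (ih Δ hΔ)
  | orR2 h ih => intro Δ hΔ; exact Der.orR2 (ih Δ hΔ)
  | @impL Γ p q c h1 h2 ih1 ih2 =>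
    intro Δ hΔ
    have hc := hΔ _ (Multiset.mem_cons_self _ _)
    exact (Der.impL (ih1 _ (mem_erase_ext hc hΔ))
      (ih2 _ (mem_ext (mem_erase_ext hc hΔ) q))).ex (Multiset.cons_erase hc)
  | @impR Γ p q h ih =>
    intro Δ hΔ; exact Der.impR (ih _ (mem_ext hΔ p))
  | @negL Γ p c h ih =>
    intro Δ hΔ
    have hc := hΔ _ (Multiset.mem_cons_self _ _)
    exact (Der.negL (ih _ (mem_erase_ext hc hΔ))).ex (Multiset.cons_erase hc)
  | @negR Γ p h ih =>
    intro Δ hΔ; exact Der.negR (ih _ (mem_ext hΔ p))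
  | botL Γ p =>
    intro Δ hΔ; exact der_bot (hΔ _ (Multiset.mem_cons_self _ _)) p
  | topR Γ => intro Δ _; exact Der.topR Δ
  | zero h ih => intro Δ hΔ; exact Der.zero (ih Δ hΔ)
  | @fix Γ p q c h1 h2 ih1 ih2 =>
    intro Δ hΔ
    have hc := hΔ _ (Multiset.mem_cons_self _ _)
    exact (Der.fix (ih1 _ (mem_ext (mem_erase_ext hc hΔ) c))
      (ih2 _ (mem_ext (mem_erase_ext hc hΔ) q))).ex (Multiset.cons_erase hc)
  | @prepost Γ p q a b h1 h2 ih1 ih2 =>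
    intro Δ hΔ
    have hc := hΔ _ (Multiset.mem_cons_self _ _)
    exact (Der.prepost (ih1 _ (mem_ext (mem_erase_ext hc hΔ) a))
      (ih2 _ (mem_ext (mem_erase_ext hc hΔ) q))).ex (Multiset.cons_erase hc)

theorem der_contr {x : PCLForm} {Δ : Multiset PCLForm} {c : PCLForm}
    (d : Der (x ::ₘ x ::ₘ Δ) c) : Der (x ::ₘ Δ) c := by
  refine der_sub d _ ?_
  intro a ha
  simp only [Multiset.mem_cons] at ha ⊢
  tauto

theorem cons_cases {y c : PCLForm} {s Δ : Multiset PCLForm} (h : y ::ₘ s = c ::ₘ Δ) :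
    (y = c ∧ s = Δ) ∨ ∃ Δ', Δ = y ::ₘ Δ' ∧ s = c ::ₘ Δ' := by
  by_cases e : y = c
  · subst e; left; exact ⟨rfl, by simpa using h⟩
  · right
    have hy : y ∈ c ::ₘ Δ := h ▸ Multiset.mem_cons_self y s
    have hyΔ : y ∈ Δ := by
      rcases Multiset.mem_cons.mp hy with h' | h'
      · exact absurd h' e
      · exact h'
    refine ⟨Δ.erase y, (Multiset.cons_erase hyΔ).symm, ?_⟩
    have h2 := congrArg (fun t => Multiset.erase t y) h
    simpa [Multiset.erase_cons_tail _ (fun hh => e hh.symm)] using h2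

/-- Inversion of ∧L: if `u ∧ v, Γ ⊢ c` then `u, v, Γ ⊢ c`. -/
theorem pcl_conj_inv {Γ : Multiset PCLForm} {c : PCLForm} (d : Der Γ c) :
    ∀ u v (Δ : Multiset PCLForm), Γ = (PCLForm.conj u v) ::ₘ Δ →
      Der (u ::ₘ v ::ₘ Δ) c := by
  induction d with
  | id Γ p =>
    intro u v Δ h
    rcases cons_cases h with ⟨rfl, rfl⟩ | ⟨Δ', rfl, _⟩
    · exact Der.andR (der_mem (by simp)) (der_mem (by simp))
    · exact der_mem (by simp)
  | @andL1 Γ p q c prem ih =>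
    intro u v Δ h
    rcases cons_cases h with ⟨e1, rfl⟩ | ⟨Δ', rfl, rfl⟩
    · injection e1 with e1a e1b; subst e1a; subst e1b
      have h1 : Der (p ::ₘ q ::ₘ (p ::ₘ Γ)) c :=
        ih p q (p ::ₘ Γ) (by simp [Multiset.cons_swap])
      have h2 : Der (p ::ₘ p ::ₘ (q ::ₘ Γ)) c := h1.ex (by simp [Multiset.cons_swap])
      exact der_contr h2
    · have h1 : Der (u ::ₘ v ::ₘ (p ::ₘ PCLForm.conj p q ::ₘ Δ')) c :=
        ih u v (p ::ₘ PCLForm.conj p q ::ₘ Δ') (by simp [Multiset.cons_swap])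
      have h2 : Der (p ::ₘ PCLForm.conj p q ::ₘ (u ::ₘ v ::ₘ Δ')) c :=
        h1.ex (by simp [Multiset.cons_swap])
      exact (Der.andL1 h2).ex (by simp [Multiset.cons_swap])
  | @andL2 Γ p q c prem ih =>
    intro u v Δ h
    rcases cons_cases h with ⟨e1, rfl⟩ | ⟨Δ', rfl, rfl⟩
    · injection e1 with e1a e1b; subst e1a; subst e1b
      have h1 : Der (p ::ₘ q ::ₘ (q ::ₘ Γ)) c :=
        ih p q (q ::ₘ Γ) (by simp [Multiset.cons_swap])
      have h2 : Der (q ::ₘ q ::ₘ (p ::ₘ Γ)) c := h1.ex (by simp [Multiset.cons_swap])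
      exact (der_contr h2).ex (by simp [Multiset.cons_swap])
    · have h1 : Der (u ::ₘ v ::ₘ (q ::ₘ PCLForm.conj p q ::ₘ Δ')) c :=
        ih u v (q ::ₘ PCLForm.conj p q ::ₘ Δ') (by simp [Multiset.cons_swap])
      have h2 : Der (q ::ₘ PCLForm.conj p q ::ₘ (u ::ₘ v ::ₘ Δ')) c :=
        h1.ex (by simp [Multiset.cons_swap])
      exact (Der.andL2 h2).ex (by simp [Multiset.cons_swap])
  | andR d1 d2 ih1 ih2 =>
    intro u v Δ h
    exact Der.andR (ih1 u v Δ h) (ih2 u v Δ h)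
  | @orL Γ p q c d1 d2 ih1 ih2 =>
    intro u v Δ h
    rcases cons_cases h with ⟨e1, rfl⟩ | ⟨Δ', rfl, rfl⟩
    · exact PCLForm.noConfusion e1
    · have h1 : Der (p ::ₘ PCLForm.disj p q ::ₘ (u ::ₘ v ::ₘ Δ')) c :=
        (ih1 u v (p ::ₘ PCLForm.disj p q ::ₘ Δ')
          (by simp [Multiset.cons_swap])).ex (by simp [Multiset.cons_swap])
      have h2 : Der (q ::ₘ PCLForm.disj p q ::ₘ (u ::ₘ v ::ₘ Δ')) c :=
        (ih2 u v (q ::ₘ PCLForm.disj p q ::ₘ Δ')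
          (by simp [Multiset.cons_swap])).ex (by simp [Multiset.cons_swap])
      exact (Der.orL h1 h2).ex (by simp [Multiset.cons_swap])
  | orR1 d ih => intro u v Δ h; exact Der.orR1 (ih u v Δ h)
  | orR2 d ih => intro u v Δ h; exact Der.orR2 (ih u v Δ h)
  | @impL Γ p q c d1 d2 ih1 ih2 =>
    intro u v Δ h
    rcases cons_cases h with ⟨e1, rfl⟩ | ⟨Δ', rfl, rfl⟩
    · exact PCLForm.noConfusion e1
    · have h1 : Der (PCLForm.imp p q ::ₘ (u ::ₘ v ::ₘ Δ')) p :=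
        (ih1 u v (PCLForm.imp p q ::ₘ Δ')
          (by simp [Multiset.cons_swap])).ex (by simp [Multiset.cons_swap])
      have h2 : Der (q ::ₘ PCLForm.imp p q ::ₘ (u ::ₘ v ::ₘ Δ')) c :=
        (ih2 u v (q ::ₘ PCLForm.imp p q ::ₘ Δ')
          (by simp [Multiset.cons_swap])).ex (by simp [Multiset.cons_swap])
      exact (Der.impL h1 h2).ex (by simp [Multiset.cons_swap])
  | @impR Γ p q d ih =>
    intro u v Δ h
    subst h
    have h1 : Der (p ::ₘ (u ::ₘ v ::ₘ Δ)) q :=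
      (ih u v (p ::ₘ Δ) (by simp [Multiset.cons_swap])).ex (by simp [Multiset.cons_swap])
    exact Der.impR h1
  | @negL Γ p c d ih =>
    intro u v Δ h
    rcases cons_cases h with ⟨e1, rfl⟩ | ⟨Δ', rfl, rfl⟩
    · exact PCLForm.noConfusion e1
    · have h1 : Der (PCLForm.neg p ::ₘ (u ::ₘ v ::ₘ Δ')) p :=
        (ih u v (PCLForm.neg p ::ₘ Δ')
          (by simp [Multiset.cons_swap])).ex (by simp [Multiset.cons_swap])
      exact (Der.negL h1).ex (by simp [Multiset.cons_swap])
  | @negR Γ p d ih =>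
    intro u v Δ h
    subst h
    have h1 : Der (p ::ₘ (u ::ₘ v ::ₘ Δ)) PCLForm.bot :=
      (ih u v (p ::ₘ Δ) (by simp [Multiset.cons_swap])).ex (by simp [Multiset.cons_swap])
    exact Der.negR h1
  | botL Γ p =>
    intro u v Δ h
    rcases cons_cases h with ⟨e1, rfl⟩ | ⟨Δ', rfl, _⟩
    · exact PCLForm.noConfusion e1
    · exact der_bot (by simp) p
  | topR Γ => intro u v Δ _; exact Der.topR _
  | zero d ih => intro u v Δ h; exact Der.zero (ih u v Δ h)
  | @fix Γ p q c d1 d2 ih1 ih2 =>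
    intro u v Δ h
    rcases cons_cases h with ⟨e1, rfl⟩ | ⟨Δ', rfl, rfl⟩
    · exact PCLForm.noConfusion e1
    · have h1 : Der (c ::ₘ PCLForm.cimp p q ::ₘ (u ::ₘ v ::ₘ Δ')) p :=
        (ih1 u v (c ::ₘ PCLForm.cimp p q ::ₘ Δ')
          (by simp [Multiset.cons_swap])).ex (by simp [Multiset.cons_swap])
      have h2 : Der (q ::ₘ PCLForm.cimp p q ::ₘ (u ::ₘ v ::ₘ Δ')) c :=
        (ih2 u v (q ::ₘ PCLForm.cimp p q ::ₘ Δ')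
          (by simp [Multiset.cons_swap])).ex (by simp [Multiset.cons_swap])
      exact (Der.fix h1 h2).ex (by simp [Multiset.cons_swap])
  | @prepost Γ p q a b d1 d2 ih1 ih2 =>
    intro u v Δ h
    rcases cons_cases h with ⟨e1, rfl⟩ | ⟨Δ', rfl, rfl⟩
    · exact PCLForm.noConfusion e1
    · have h1 : Der (a ::ₘ PCLForm.cimp p q ::ₘ (u ::ₘ v ::ₘ Δ')) p :=
        (ih1 u v (a ::ₘ PCLForm.cimp p q ::ₘ Δ')
          (by simp [Multiset.cons_swap])).ex (by simp [Multiset.cons_swap])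
      have h2 : Der (q ::ₘ PCLForm.cimp p q ::ₘ (u ::ₘ v ::ₘ Δ')) b :=
        (ih2 u v (q ::ₘ PCLForm.cimp p q ::ₘ Δ')
          (by simp [Multiset.cons_swap])).ex (by simp [Multiset.cons_swap])
      exact (Der.prepost h1 h2).ex (by simp [Multiset.cons_swap])

theorem split_aux : ∀ (ps : List PCLForm) (p : PCLForm) (Γ : Multiset PCLForm) (c : PCLForm),
    Der (conjList p ps ::ₘ Γ) c → Der (p ::ₘ ((ps : Multiset PCLForm) + Γ)) c := by
  intro ps
  induction ps with
  | nil => intro p Γ c h; simpa [conjList] using h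
  | cons q rest ih =>
    intro p Γ c h
    have h1 : Der (p ::ₘ conjList q rest ::ₘ Γ) c :=
      pcl_conj_inv h p (conjList q rest) Γ rfl
    have h2 : Der (conjList q rest ::ₘ (p ::ₘ Γ)) c := h1.ex (by simp [Multiset.cons_swap])
    have h3 := ih q (p ::ₘ Γ) c h2
    exact h3.ex (by simp [Multiset.cons_swap, ← Multiset.cons_coe])


/-- Conjunction splitting on the left, in cut-free PCL: if the single-formula
sequent `p₁ ∧ … ∧ pₙ ⊢ q` is derivable then the multiset sequent
`p₁, …, pₙ ⊢ q` is derivable. -/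
theorem pcl_conj_split_left (p : PCLForm) (ps : List PCLForm) (q : PCLForm)
    (h : Der {conjList p ps} q) :
    Der (p ::ₘ (ps : Multiset PCLForm)) q := by
  have := split_aux ps p 0 q (h.ex (by simp))
  simpa using this
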